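/- arXiv:1902.02755 — 2 statements merged into one kernel-verified Lean document; each statement's English description precedes it below -/
import Mathlib

section
/- If M is a monotonic machine, then the transformed machine S(M) is also monotonic: every sequence covering a state of S(M) covers each parent state of that state. -/
open scoped Classical

/-- A machine over alphabet `σ` with states in `Q`: a set of labeled edges together with a
designated initial state. (Being a DAG with the initial state a source is expressed by the
predicates `Machine.Acyclic` and `Machine.InitSource`.) -/
structure Machine (σ : Type) (Q : Type) where
  edges : Finset (Q × σ × Q)
  init : Q

namespace Machine

variable {σ Q : Type}

/-- There is an edge labeled `a` from `w` to `v`. -/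
def IsEdge (M : Machine σ Q) (w : Q) (a : σ) (v : Q) : Prop := (w, a, v) ∈ M.edges

/-- `w` is a parent of `v`. -/
def IsParent (M : Machine σ Q) (w v : Q) : Prop := ∃ a, M.IsEdge w a v

/-- The machine is acyclic (a DAG). -/
def Acyclic (M : Machine σ Q) : Prop :=
  ∀ v, ¬ Relation.TransGen M.IsParent v v

/-- The initial state is a source: it has no incoming edges. -/
def InitSource (M : Machine σ Q) : Prop := ∀ w a, ¬ M.IsEdge w a M.init

/-- `u` is a strict ancestor of `v`. -/
def StrictAncestor (M : Machine σ Q) : Q → Q → Prop := Relation.TransGen M.IsParent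

/-- `M.Reach v t`: `t` is the sequence of edge labels along a directed path
from the initial state to `v`. -/
inductive Reach (M : Machine σ Q) : Q → List σ → Prop
  | init : Reach M M.init []
  | step {w v : Q} {a : σ} {t : List σ} : Reach M w t → M.IsEdge w a v → Reach M v (t ++ [a])

/-- A sequence `s` covers a state `v` if some (not necessarily contiguous) subsequence of
`s` is the label sequence of a directed path from the initial state to `v`. -/
def CoversState (M : Machine σ Q) (s : List σ) (v : Q) : Prop :=
  ∃ t : List σ, M.Reach v t ∧ t.Sublist s

/-- `M` is monotonic: every sequence covering a state covers each parent of that state. -/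
def Monotonic (M : Machine σ Q) : Prop :=
  ∀ v w a, M.IsEdge w a v → ∀ s : List σ, M.CoversState s v → M.CoversState s w

/-- `M` is simple: for every state, the labels of its incoming edges are pairwise
distinct. -/
def Simple (M : Machine σ Q) : Prop :=
  ∀ v a w₁ w₂, M.IsEdge w₁ a v → M.IsEdge w₂ a v → w₁ = w₂

end Machine

namespace Machine

variable {σ Q : Type}

/-- `sub(V;a)`: the set of states from which an edge labeled `a` enters a member of `V`. -/
noncomputable def subSet [Fintype Q] (M : Machine σ Q) (V : Finset Q) (a : σ) : Finset Q :=
  Finset.univ.filter (fun w => ∃ v ∈ V, M.IsEdge w a v)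

/-- `inc(V)`: the set of labels of all edges entering members of `V`. -/
noncomputable def inc (M : Machine σ Q) (V : Finset Q) : Finset σ :=
  (M.edges.filter (fun e => e.2.2 ∈ V)).image (fun e => e.2.1)

/-- `parent(V;a)`: the elements of `sub(V;a) ∪ V` having no strict ancestor inside
`sub(V;a) ∪ V`. -/
noncomputable def parentSet [Fintype Q] (M : Machine σ Q) (V : Finset Q) (a : σ) :
    Finset Q :=
  (M.subSet V a ∪ V).filter (fun w => ∀ u ∈ M.subSet V a ∪ V, ¬ M.StrictAncestor u w)

/-- The transformed machine `S(M)` (on the state space of all sets of states of `M`):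
for each set `V` and each `a ∈ inc(V)` there is an edge labeled `a` from `parent(V;a)`
to `V`; the initial state is `{i}`. -/
noncomputable def SMachine [Fintype σ] [Fintype Q] (M : Machine σ Q) :
    Machine σ (Finset Q) where
  init := {M.init}
  edges := Finset.univ.filter (fun e : Finset Q × σ × Finset Q =>
    e.2.1 ∈ M.inc e.2.2 ∧ e.1 = M.parentSet e.2.2 e.2.1)

/-- `M.InClosure V U` holds iff `U ∈ closure(V)`, where
`closure(V) = {V} ∪ ⋃_{a ∈ inc(V)} closure(parent(V;a))`. -/
inductive InClosure [Fintype Q] (M : Machine σ Q) : Finset Q → Finset Q → Prop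
  | refl (V : Finset Q) : InClosure M V V
  | step {V U : Finset Q} {a : σ} : a ∈ M.inc V → InClosure M (M.parentSet V a) U →
      InClosure M V U

/-- The states of the transformed machine `S(M)`: the union of `closure({v})` over all
states `v` of `M`. -/
def SStates [Fintype Q] (M : Machine σ Q) : Set (Finset Q) :=
  {U | ∃ v : Q, M.InClosure {v} U}

end Machine


namespace Machine

variable {σ Q : Type}

lemma mem_subSet' [Fintype Q] {M : Machine σ Q} {V : Finset Q} {a : σ} {w : Q} :
    w ∈ M.subSet V a ↔ ∃ v ∈ V, M.IsEdge w a v := by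
  simp [subSet]

lemma mem_inc' {M : Machine σ Q} {V : Finset Q} {a : σ} :
    a ∈ M.inc V ↔ ∃ w v, v ∈ V ∧ M.IsEdge w a v := by
  constructor
  · intro h
    simp only [inc, Finset.mem_image, Finset.mem_filter] at h
    obtain ⟨⟨w, b, v⟩, ⟨he, hv⟩, rfl⟩ := h
    exact ⟨w, v, hv, he⟩
  · rintro ⟨w, v, hv, he⟩
    simp only [inc, Finset.mem_image, Finset.mem_filter]
    exact ⟨(w, a, v), ⟨he, hv⟩, rfl⟩

lemma mem_parentSet' [Fintype Q] {M : Machine σ Q} {V : Finset Q} {a : σ} {w : Q} :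
    w ∈ M.parentSet V a ↔ w ∈ M.subSet V a ∪ V ∧
      ∀ u ∈ M.subSet V a ∪ V, ¬ M.StrictAncestor u w := by
  simp [parentSet]

lemma sm_isEdge_iff [Fintype σ] [Fintype Q] {M : Machine σ Q} {W V : Finset Q} {a : σ} :
    (M.SMachine).IsEdge W a V ↔ a ∈ M.inc V ∧ W = M.parentSet V a := by
  simp [SMachine, IsEdge]

lemma sm_init [Fintype σ] [Fintype Q] {M : Machine σ Q} :
    (M.SMachine).init = {M.init} := rfl

lemma reach_nil {M : Machine σ Q} {v : Q} (h : M.Reach v []) : v = M.init := by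
  generalize ht : ([] : List σ) = t at h
  cases h with
  | init => rfl
  | step h1 h2 => exact absurd ht.symm (List.append_ne_nil_of_right_ne_nil _ (by simp))

lemma covers_ancestor {M : Machine σ Q} (hmono : M.Monotonic) {v u : Q}
    (h : M.StrictAncestor u v) :
    ∀ s, M.CoversState s v → M.CoversState s u := by
  induction h with
  | single h => intro s hc; obtain ⟨a, ha⟩ := h; exact hmono _ _ _ ha s hc
  | tail h1 h2 ih =>
      intro s hc
      obtain ⟨a, ha⟩ := h2
      exact ih s (hmono _ _ _ ha s hc)

lemma init_ancestor {M : Machine σ Q} {v : Q} {t : List σ} (h : M.Reach v t)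
    (hv : v ≠ M.init) : M.StrictAncestor M.init v := by
  induction h with
  | init => exact absurd rfl hv
  | @step w v' a t' h1 h2 ih =>
      by_cases hw : w = M.init
      · subst hw; exact Relation.TransGen.single ⟨a, h2⟩
      · exact (ih hw).tail ⟨a, h2⟩

lemma reach_descend {M : Machine σ Q} {p v : Q} (h : M.StrictAncestor p v) :
    (∃ t, M.Reach p t) → ∃ t', M.Reach v t' := by
  induction h with
  | single h =>
      rintro ⟨t, ht⟩; obtain ⟨a, ha⟩ := h; exact ⟨t ++ [a], ht.step ha⟩
  | tail h1 h2 ih =>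
      intro ht
      obtain ⟨t, ht'⟩ := ih ht
      obtain ⟨a, ha⟩ := h2
      exact ⟨t ++ [a], ht'.step ha⟩

lemma exists_maximal_aux [Fintype Q] (M : Machine σ Q) (hacyc : M.Acyclic)
    (X : Finset Q) : ∀ n (x : Q), x ∈ X →
      (X.filter (fun u => M.StrictAncestor u x)).card ≤ n →
      ∃ p ∈ X, (p = x ∨ M.StrictAncestor p x) ∧ ∀ u ∈ X, ¬ M.StrictAncestor u p := by
  intro n
  induction n with
  | zero =>
      intro x hx hc
      refine ⟨x, hx, Or.inl rfl, fun u hu hux => ?_⟩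
      have : u ∈ X.filter (fun u => M.StrictAncestor u x) := Finset.mem_filter.mpr ⟨hu, hux⟩
      have := Finset.card_pos.mpr ⟨u, this⟩
      omega
  | succ n ih =>
      intro x hx hc
      by_cases h : ∀ u ∈ X, ¬ M.StrictAncestor u x
      · exact ⟨x, hx, Or.inl rfl, h⟩
      · push_neg at h
        obtain ⟨u, hu, hux⟩ := h
        have hsub : X.filter (fun w => M.StrictAncestor w u) ⊂
            X.filter (fun w => M.StrictAncestor w x) := by
          constructor
          · intro w hw
            obtain ⟨hw1, hw2⟩ := Finset.mem_filter.mp hw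
            exact Finset.mem_filter.mpr ⟨hw1, hw2.trans hux⟩
          · intro hcontra
            have hu' : u ∈ X.filter (fun w => M.StrictAncestor w x) :=
              Finset.mem_filter.mpr ⟨hu, hux⟩
            have := (Finset.mem_filter.mp (hcontra hu')).2
            exact hacyc u this
        have hlt := Finset.card_lt_card hsub
        obtain ⟨p, hp, hpa, hpm⟩ := ih u hu (by omega)
        refine ⟨p, hp, Or.inr ?_, hpm⟩
        rcases hpa with rfl | hpa
        · exact hux
        · exact hpa.trans hux
  
lemma exists_maximal [Fintype Q] (M : Machine σ Q) (hacyc : M.Acyclic)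
    (X : Finset Q) (x : Q) (hx : x ∈ X) :
    ∃ p ∈ X, (p = x ∨ M.StrictAncestor p x) ∧ ∀ u ∈ X, ¬ M.StrictAncestor u p :=
  exists_maximal_aux M hacyc X _ x hx le_rfl

lemma parentSet_reachable [Fintype Q] {M : Machine σ Q} (hmono : M.Monotonic)
    {V : Finset Q} {a : σ} (hV : ∀ v ∈ V, ∃ t, M.Reach v t) :
    ∀ p ∈ M.parentSet V a, ∃ t, M.Reach p t := by
  intro p hp
  have hp' := (mem_parentSet'.mp hp).1
  rcases Finset.mem_union.mp hp' with h | h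
  · obtain ⟨v, hv, he⟩ := mem_subSet'.mp h
    obtain ⟨t, ht⟩ := hV v hv
    obtain ⟨t', ht', _⟩ := hmono v p a he t ⟨t, ht, List.Sublist.refl t⟩
    exact ⟨t', ht'⟩
  · exact hV p h

lemma parentSet_antichain [Fintype Q] {M : Machine σ Q} {V : Finset Q} {a : σ} :
    ∀ x ∈ M.parentSet V a, ∀ y ∈ M.parentSet V a, ¬ M.StrictAncestor x y := by
  intro x hx y hy
  exact (mem_parentSet'.mp hy).2 x (mem_parentSet'.mp hx).1

lemma sm_exists_covered [Fintype σ] [Fintype Q] {M : Machine σ Q} {V : Finset Q}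
    {T : List σ} (h : (M.SMachine).Reach V T) :
    ∃ v ∈ V, ∃ t, M.Reach v t ∧ t.Sublist T := by
  induction h with
  | init =>
      exact ⟨M.init, Finset.mem_singleton_self _, [], Reach.init, List.nil_sublist _⟩
  | @step W V' b T' h1 h2 ih =>
      obtain ⟨hb, rfl⟩ := sm_isEdge_iff.mp h2
      obtain ⟨p, hp, t, ht, hts⟩ := ih
      have hp' := (mem_parentSet'.mp hp).1
      rcases Finset.mem_union.mp hp' with h | h
      · obtain ⟨v, hv, he⟩ := mem_subSet'.mp h
        exact ⟨v, hv, t ++ [b], ht.step he, hts.append (List.Sublist.refl [b])⟩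
      · exact ⟨p, h, t, ht, hts.trans (List.sublist_append_left T' [b])⟩

lemma sm_reach_reachable [Fintype σ] [Fintype Q] {M : Machine σ Q}
    (hacyc : M.Acyclic) {V : Finset Q} {T : List σ} (h : (M.SMachine).Reach V T) :
    ∀ v ∈ V, ∃ t, M.Reach v t := by
  induction h with
  | init =>
      intro v hv
      rw [sm_init, Finset.mem_singleton] at hv
      exact ⟨[], hv ▸ Reach.init⟩
  | @step W V' b T' h1 h2 ih =>
      obtain ⟨hb, rfl⟩ := sm_isEdge_iff.mp h2
      intro v hv
      obtain ⟨p, hpU, hpa, hpm⟩ := exists_maximal M hacyc (M.subSet V' b ∪ V') v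
        (Finset.mem_union_right _ hv)
      have hpP : p ∈ M.parentSet V' b := mem_parentSet'.mpr ⟨hpU, hpm⟩
      obtain ⟨t, ht⟩ := ih p hpP
      rcases hpa with rfl | hanc
      · exact ⟨t, ht⟩
      · exact reach_descend hanc ⟨t, ht⟩

lemma coversC [Fintype σ] [Fintype Q] (M : Machine σ Q) (hacyc : M.Acyclic)
    (hmono : M.Monotonic) :
    ∀ n (s : List σ), s.length ≤ n → ∀ V : Finset Q,
      (∀ v ∈ V, ∃ t, M.Reach v t) →
      (∀ x ∈ V, ∀ y ∈ V, ¬ M.StrictAncestor x y) →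
      ∀ v ∈ V, ∀ t, M.Reach v t → t.Sublist s →
      (M.SMachine).CoversState s V := by
  intro n
  induction n with
  | zero =>
      intro s hs V hR hA v hv t ht hts
      have hs0 : s = [] := List.length_eq_zero_iff.mp (Nat.le_zero.mp hs)
      subst hs0
      have ht0 : t = [] := List.sublist_nil.mp hts
      subst ht0
      have hvi : v = M.init := reach_nil ht
      subst hvi
      have hVeq : V = {M.init} := by
        apply Finset.ext
        intro x
        simp only [Finset.mem_singleton]
        constructor
        · intro hxV
          by_contra hne
          obtain ⟨tx, htx⟩ := hR x hxV
          exact hA M.init hv x hxV (init_ancestor htx hne)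
        · rintro rfl; exact hv
      subst hVeq
      exact ⟨[], Reach.init, List.nil_sublist _⟩
  | succ n ih =>
      intro s hs V hR hA v hv t ht hts
      by_cases hvi : v = M.init
      · subst hvi
        have hVeq : V = {M.init} := by
          apply Finset.ext
          intro x
          simp only [Finset.mem_singleton]
          constructor
          · intro hxV
            by_contra hne
            obtain ⟨tx, htx⟩ := hR x hxV
            exact hA M.init hv x hxV (init_ancestor htx hne)
          · rintro rfl; exact hv
        subst hVeq
        exact ⟨[], Reach.init, List.nil_sublist _⟩
      · cases ht with
        | init => exact absurd rfl hvi
        | @step r v' b t' hr he =>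
            have hb : b ∈ M.inc V := mem_inc'.mpr ⟨r, v, hv, he⟩
            set P := M.parentSet V b with hP
            have hPA : ∀ x ∈ P, ∀ y ∈ P, ¬ M.StrictAncestor x y := parentSet_antichain
            have hPR : ∀ p ∈ P, ∃ tt, M.Reach p tt := parentSet_reachable hmono hR
            have hrU : r ∈ M.subSet V b ∪ V :=
              Finset.mem_union_left _ (mem_subSet'.mpr ⟨v, hv, he⟩)
            obtain ⟨p, hpU, hpa, hpm⟩ := exists_maximal M hacyc (M.subSet V b ∪ V) r hrU
            have hpP : p ∈ P := mem_parentSet'.mpr ⟨hpU, hpm⟩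
            obtain ⟨s₀, s₁, rfl, hts₀, hbs₁⟩ := List.append_sublist_iff.mp hts
            have hcovr : M.CoversState s₀ r := ⟨t', hr, hts₀⟩
            have hcovp : M.CoversState s₀ p := by
              rcases hpa with rfl | hanc
              · exact hcovr
              · exact covers_ancestor hmono hanc s₀ hcovr
            obtain ⟨tp, htp, htps⟩ := hcovp
            have hlen : s₀.length ≤ n := by
              have h1 : 1 ≤ s₁.length := by
                have := hbs₁.length_le
                simpa using this
              have := hs
              simp only [List.length_append] at this
              omega
            obtain ⟨T, hT, hTs⟩ := ih s₀ hlen P hPR hPA p hpP tp htp htps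
            have hedge : (M.SMachine).IsEdge P b V := sm_isEdge_iff.mpr ⟨hb, rfl⟩
            exact ⟨T ++ [b], hT.step hedge, hTs.append hbs₁⟩

end Machine

/-- if `M` is monotonic then the transformed machine `S(M)` is monotonic:
every sequence covering a state of `S(M)` covers each parent state of that state. -/
theorem SMachine_monotonic {σ Q : Type} [Fintype σ] [Fintype Q] (M : Machine σ Q)
    (hacyc : M.Acyclic) (hsrc : M.InitSource) (hmono : M.Monotonic) :
    ∀ V ∈ Machine.SStates M, ∀ (W : Finset Q) (a : σ),
      (Machine.SMachine M).IsEdge W a V →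
      ∀ s : List σ, (Machine.SMachine M).CoversState s V →
        (Machine.SMachine M).CoversState s W := by
  intro V hV W a hE s hcov
  obtain ⟨ha, rfl⟩ : a ∈ M.inc V ∧ W = M.parentSet V a := Machine.sm_isEdge_iff.mp hE
  obtain ⟨T, hT, hTs⟩ := hcov
  have hVR : ∀ v ∈ V, ∃ t, M.Reach v t := Machine.sm_reach_reachable hacyc hT
  have hWR : ∀ p ∈ M.parentSet V a, ∃ t, M.Reach p t :=
    Machine.parentSet_reachable hmono hVR
  have hWA : ∀ x ∈ M.parentSet V a, ∀ y ∈ M.parentSet V a, ¬ M.StrictAncestor x y :=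
    Machine.parentSet_antichain
  obtain ⟨v0, hv0, t0, ht0, ht0T⟩ := Machine.sm_exists_covered hT
  obtain ⟨p, hpU, hpa, hpm⟩ := Machine.exists_maximal M hacyc (M.subSet V a ∪ V) v0
    (Finset.mem_union_right _ hv0)
  have hpP : p ∈ M.parentSet V a := Machine.mem_parentSet'.mpr ⟨hpU, hpm⟩
  have hcovp : M.CoversState s p := by
    rcases hpa with rfl | hanc
    · exact ⟨t0, ht0, ht0T.trans hTs⟩
    · exact Machine.covers_ancestor hmono hanc s ⟨t0, ht0, ht0T.trans hTs⟩
  obtain ⟨tp, htp, htps⟩ := hcovp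
  exact Machine.coversC M hacyc hmono s.length s le_rfl (M.parentSet V a) hWR hWA p hpP tp htp htps
end

section
/- Let M be a monotonic machine, let v be a non-initial state of M, and let α_v be the corresponding state of the co-machine co(M). A sequence s of length L ≥ 2 covers α_v in co(M) if and only if both the prefix s[1,L−1] and the suffix s[2,L] cover v in M. -/
open scoped Classical

/-- The states of the co-machine: the initial state `η` (`none`), pair states
`(V₁, V₂)` of sets of states of `M`, and one state `α_v` for each non-initial state
`v` of `M`. -/
abbrev CoState (Q : Type) := Option ((Finset Q × Finset Q) ⊕ Q)

namespace Machine

variable {σ Q : Type}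

/-- The edge relation of the co-machine `co(M)`; `none` is the initial state `η`,
`some (Sum.inl (V₁, V₂))` is the pair state `(V₁, V₂)`, and `some (Sum.inr v)` is the
state `α_v`. -/
def CoEdge [Fintype Q] (M : Machine σ Q) : CoState Q → σ → CoState Q → Prop
  | β, a, some (Sum.inl (V₁, V₂)) =>
      (a ∈ M.inc V₁ ∪ M.inc V₂ ∧
        ((M.parentSet V₁ a = {M.init} ∧ V₂ = ({M.init} : Finset Q) ∧ β = none) ∨
         (¬ (M.parentSet V₁ a = {M.init} ∧ V₂ = ({M.init} : Finset Q)) ∧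
            β = some (Sum.inl (M.parentSet V₁ a, M.parentSet V₂ a))))) ∨
      (V₁ = ({M.init} : Finset Q) ∧ V₂ = ({M.init} : Finset Q) ∧ β = none)
  | β, a, some (Sum.inr v) =>
      v ≠ M.init ∧
        ((a ∈ M.inc {v} ∧ β = some (Sum.inl ({v}, M.parentSet {v} a))) ∨
         (a ∉ M.inc {v} ∧ β = some (Sum.inl (({v} : Finset Q), ({v} : Finset Q)))))
  | _, _, none => False

/-- The co-machine `co(M)`. -/
noncomputable def coMachine [Fintype σ] [Fintype Q] (M : Machine σ Q) :
    Machine σ (CoState Q) where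
  init := none
  edges := Finset.univ.filter
    (fun e : CoState Q × σ × CoState Q => M.CoEdge e.1 e.2.1 e.2.2)

/-- `M.InClosure2 p u` holds iff `u ∈ closure(p)` for pairs, where
`closure((V,W)) = {(V,W)} ∪ ⋃_{a ∈ inc(V) ∪ inc(W)} closure((parent(V;a), parent(W;a)))`. -/
inductive InClosure2 [Fintype Q] (M : Machine σ Q) :
    Finset Q × Finset Q → Finset Q × Finset Q → Prop
  | refl (p : Finset Q × Finset Q) : InClosure2 M p p
  | step {p u : Finset Q × Finset Q} {a : σ} : a ∈ M.inc p.1 ∪ M.inc p.2 →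
      InClosure2 M (M.parentSet p.1 a, M.parentSet p.2 a) u → InClosure2 M p u

/-- The pair states of `co(M)`: all pairs in `closure(({v}, parent({v};a)))` for `v` a
non-initial state of `M` and `a ∈ inc({v})`, together with all pairs in
`closure(({v},{v}))`. -/
def CoPairStates [Fintype Q] (M : Machine σ Q) : Set (Finset Q × Finset Q) :=
  {p | ∃ v : Q, v ≠ M.init ∧
    ((∃ a ∈ M.inc {v}, M.InClosure2 ({v}, M.parentSet {v} a) p) ∨
      M.InClosure2 ({v}, {v}) p)}

/-- The states of `co(M)`: the initial state `η`, the pair states, and the states `α_v`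
for non-initial `v`. -/
def CoStates [Fintype Q] (M : Machine σ Q) : Set (CoState Q) :=
  {none} ∪ (fun p => some (Sum.inl p)) '' M.CoPairStates ∪
    (fun v => some (Sum.inr v)) '' {v : Q | v ≠ M.init}

end Machine

/-- The contiguous sub-window `s[i,j]` (1-based, inclusive). -/
def window {α : Type} (s : List α) (i j : ℕ) : List α := (s.take j).drop (i - 1)


section AuxProofs
set_option linter.unusedSectionVars false

open List

variable {σ Q : Type} [Fintype σ] [Fintype Q] {M : Machine σ Q}

/-- `V` is an antichain for the strict-ancestor order. -/
def Antich (M : Machine σ Q) (V : Finset Q) : Prop :=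
  ∀ x ∈ V, ∀ y ∈ V, ¬ M.StrictAncestor x y

/-- every element of `V` is coverable. -/
def CovAll (M : Machine σ Q) (V : Finset Q) : Prop :=
  ∀ x ∈ V, ∃ s : List σ, M.CoversState s x

theorem sublist_concat_cases {t s : List σ} {a : σ} (h : t.Sublist (s ++ [a])) :
    t.Sublist s ∨ ∃ t', t = t' ++ [a] ∧ t'.Sublist s := by
  have h' : t.reverse.Sublist (a :: s.reverse) := by
    simpa [List.reverse_append] using List.reverse_sublist.mpr h
  rcases List.sublist_cons_iff.mp h' with h1 | ⟨r, hr, hrs⟩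
  · left
    exact List.reverse_sublist.mp h1
  · right
    refine ⟨r.reverse, ?_, ?_⟩
    · rw [← List.reverse_reverse t, hr]; simp
    · exact List.reverse_sublist.mp (by simpa using hrs)

theorem cons_sublist_tail {x : σ} : ∀ {l s : List σ}, (x :: l).Sublist s → l.Sublist s.tail := by
  intro l s h
  induction s with
  | nil => exact absurd (List.sublist_nil.mp h) (by simp)
  | cons y s ihs =>
    rcases List.sublist_cons_iff.mp h with h2 | ⟨r, hr, hrs⟩
    · exact (List.sublist_cons_self x l).trans h2
    · injection hr with h3 h4
      subst h4
      exact hrs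

theorem tail_sublist_tail {l s : List σ} (h : l.Sublist s) : l.tail.Sublist s.tail := by
  cases l with
  | nil => exact List.nil_sublist _
  | cons x l => exact cons_sublist_tail h

theorem concat_sublist_dropLast {t s : List σ} {a : σ} (h : (t ++ [a]).Sublist s) :
    t.Sublist s.dropLast := by
  have h1 : (a :: t.reverse).Sublist s.reverse := by
    simpa [List.reverse_append] using List.reverse_sublist.mpr h
  have h2 := cons_sublist_tail h1
  rw [List.tail_reverse] at h2
  exact List.reverse_sublist.mp h2

theorem tail_append_of_ne_nil {l : List σ} (h : l ≠ []) (m : List σ) :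
    (l ++ m).tail = l.tail ++ m := by
  cases l with
  | nil => exact absurd rfl h
  | cons x l => simp

theorem reach_eq_init {w : Q} {t : List σ} (h : M.Reach w t) (ht : t = []) : w = M.init := by
  induction h with
  | init => rfl
  | step h e ih => simp at ht

theorem reach_concat {x : Q} {t : List σ} {a : σ} (h : M.Reach x (t ++ [a])) :
    ∃ y, M.Reach y t ∧ M.IsEdge y a x := by
  have H : ∀ {s : List σ}, M.Reach x s → s = t ++ [a] → ∃ y, M.Reach y t ∧ M.IsEdge y a x := by
    intro s h
    induction h with
    | init => intro hs; exact absurd hs.symm (by simp)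
    | @step w v a' t' hr he ih =>
      intro hs
      obtain ⟨h1, h2⟩ := List.append_inj' hs (by simp)
      subst h1
      have ha : a' = a := by simpa using h2
      subst ha
      exact ⟨w, hr, he⟩
  exact H h rfl

theorem covers_mono_sub {s s' : List σ} {x : Q} (h : M.CoversState s x) (hs : s.Sublist s') :
    M.CoversState s' x := by
  obtain ⟨t, hr, ht⟩ := h
  exact ⟨t, hr, ht.trans hs⟩

theorem covers_init {s : List σ} : M.CoversState s M.init :=
  ⟨[], Machine.Reach.init, List.nil_sublist _⟩

theorem covers_nil_eq {x : Q} (h : M.CoversState [] x) : x = M.init := by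
  obtain ⟨t, hr, hts⟩ := h
  exact reach_eq_init hr (List.sublist_nil.mp hts)

theorem covers_anc (hmono : M.Monotonic) {u x : Q} (ha : M.StrictAncestor u x) :
    ∀ {s : List σ}, M.CoversState s x → M.CoversState s u := by
  induction ha with
  | single hp => intro s h; obtain ⟨a, e⟩ := hp; exact hmono _ _ _ e s h
  | tail hanc hp ih => intro s h; obtain ⟨a, e⟩ := hp; exact ih (hmono _ _ _ e s h)

theorem covers_ancOrEq (hmono : M.Monotonic) {u x : Q} {s : List σ} (h : M.CoversState s x)
    (ha : u = x ∨ M.StrictAncestor u x) : M.CoversState s u := by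
  rcases ha with rfl | ha
  · exact h
  · exact covers_anc hmono ha h

theorem reach_init_anc {x : Q} {t : List σ} (h : M.Reach x t) :
    x = M.init ∨ M.StrictAncestor M.init x := by
  induction h with
  | init => exact Or.inl rfl
  | @step w v a t hr he ih =>
    right
    rcases ih with h1 | h1
    · subst h1; exact Relation.TransGen.single ⟨_, he⟩
    · exact h1.tail ⟨_, he⟩

theorem no_anc_init (hsrc : M.InitSource) (u : Q) : ¬ M.StrictAncestor u M.init := by
  intro h
  cases h with
  | single hp => obtain ⟨a, e⟩ := hp; exact hsrc _ _ e
  | tail _ hp => obtain ⟨a, e⟩ := hp; exact hsrc _ _ e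

theorem wf_anc (hacyc : M.Acyclic) : WellFounded M.StrictAncestor := by
  have h1 : IsTrans Q M.StrictAncestor := ⟨fun a b c h1 h2 => h1.trans h2⟩
  have h2 : IsIrrefl Q M.StrictAncestor := ⟨hacyc⟩
  exact Finite.wellFounded_of_trans_of_irrefl _

theorem mem_subSet {w : Q} {V : Finset Q} {a : σ} :
    w ∈ M.subSet V a ↔ ∃ x ∈ V, M.IsEdge w a x := by
  simp [Machine.subSet]

theorem mem_parentSet {u : Q} {V : Finset Q} {a : σ} :
    u ∈ M.parentSet V a ↔
      u ∈ M.subSet V a ∪ V ∧ ∀ w ∈ M.subSet V a ∪ V, ¬ M.StrictAncestor w u := by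
  simp [Machine.parentSet, Finset.mem_filter]

theorem mem_inc {a : σ} {V : Finset Q} :
    a ∈ M.inc V ↔ ∃ w x, x ∈ V ∧ M.IsEdge w a x := by
  unfold Machine.inc
  simp only [Finset.mem_image, Finset.mem_filter]
  constructor
  · rintro ⟨e, ⟨he, hx⟩, ha⟩
    exact ⟨e.1, e.2.2, hx, by rw [Machine.IsEdge, ← ha]; exact he⟩
  · rintro ⟨w, x, hx, he⟩
    exact ⟨(w, a, x), ⟨he, hx⟩, rfl⟩

theorem antich_parentSet {V : Finset Q} {a : σ} : Antich M (M.parentSet V a) := by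
  intro x hx y hy
  exact (mem_parentSet.mp hy).2 x (mem_parentSet.mp hx).1

theorem covAll_parentSet (hmono : M.Monotonic) {V : Finset Q} {a : σ} (h : CovAll M V) :
    CovAll M (M.parentSet V a) := by
  intro x hx
  rcases Finset.mem_union.mp (mem_parentSet.mp hx).1 with hx' | hx'
  · obtain ⟨y, hy, e⟩ := mem_subSet.mp hx'
    obtain ⟨s, hc⟩ := h y hy
    exact ⟨s, hmono _ _ _ e s hc⟩
  · exact h x hx'

theorem exists_parentSet_anc (hacyc : M.Acyclic) {V : Finset Q} {a : σ} {x : Q}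
    (hx : x ∈ M.subSet V a ∪ V) :
    ∃ z ∈ M.parentSet V a, z = x ∨ M.StrictAncestor z x := by
  refine (wf_anc hacyc).induction
    (C := fun x => x ∈ M.subSet V a ∪ V → ∃ z ∈ M.parentSet V a, z = x ∨ M.StrictAncestor z x)
    x ?_ hx
  intro x ihx hx
  by_cases hmin : ∀ w ∈ M.subSet V a ∪ V, ¬ M.StrictAncestor w x
  · exact ⟨x, mem_parentSet.mpr ⟨hx, hmin⟩, Or.inl rfl⟩
  · push_neg at hmin
    obtain ⟨w, hw, hanc⟩ := hmin
    obtain ⟨z, hz, hzw⟩ := ihx w hanc hw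
    refine ⟨z, hz, Or.inr ?_⟩
    rcases hzw with rfl | h
    · exact hanc
    · exact h.trans hanc

theorem coverable_elem (hmono : M.Monotonic) {V : Finset Q} {a : σ} {x : Q} (hC : CovAll M V)
    (hx : x ∈ M.subSet V a ∪ V) : ∃ s : List σ, M.CoversState s x := by
  rcases Finset.mem_union.mp hx with h | h
  · obtain ⟨y, hy, e⟩ := mem_subSet.mp h
    obtain ⟨s, hc⟩ := hC y hy
    exact ⟨s, hmono _ _ _ e s hc⟩
  · exact hC x h

theorem parentSet_init (hmono : M.Monotonic) (hsrc : M.InitSource) {V : Finset Q} {a : σ}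
    (hC : CovAll M V) (hi : M.init ∈ M.subSet V a ∪ V) :
    M.parentSet V a = {M.init} := by
  ext x
  simp only [Finset.mem_singleton]
  constructor
  · intro hx
    obtain ⟨hmem, hmin⟩ := mem_parentSet.mp hx
    by_contra hne
    obtain ⟨s, t, hr, _⟩ := coverable_elem hmono hC hmem
    rcases reach_init_anc hr with h | h
    · exact hne h
    · exact hmin _ hi h
  · rintro rfl
    exact mem_parentSet.mpr ⟨hi, fun w _ => no_anc_init hsrc w⟩

theorem eq_singleton_init {V : Finset Q} (hC : CovAll M V) (hA : Antich M V)
    (hi : M.init ∈ V) : V = {M.init} := by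
  ext x
  simp only [Finset.mem_singleton]
  constructor
  · intro hx
    by_contra hne
    obtain ⟨s, t, hr, _⟩ := hC x hx
    rcases reach_init_anc hr with h | h
    · exact hne h
    · exact hA _ hi _ hx h
  · rintro rfl
    exact hi

theorem cover_concat_cases {u : List σ} {c : σ} {x : Q} (h : M.CoversState (u ++ [c]) x) :
    M.CoversState u x ∨ ∃ y, M.IsEdge y c x ∧ M.CoversState u y := by
  obtain ⟨p, hr, hs⟩ := h
  rcases sublist_concat_cases hs with h1 | ⟨p', rfl, hp'⟩
  · exact Or.inl ⟨p, hr, h1⟩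
  · obtain ⟨y, hry, he⟩ := reach_concat hr
    exact Or.inr ⟨y, he, p', hry, hp'⟩

theorem witness_parentSet (hmono : M.Monotonic) (hacyc : M.Acyclic) {V : Finset Q} {c : σ}
    {w : List σ}
    (h : (∃ x ∈ V, M.CoversState w x) ∨ (∃ x ∈ V, ∃ y, M.IsEdge y c x ∧ M.CoversState w y)) :
    ∃ z ∈ M.parentSet V c, M.CoversState w z := by
  rcases h with ⟨x, hx, hc⟩ | ⟨x, hx, y, he, hc⟩
  · obtain ⟨z, hz, hzx⟩ := exists_parentSet_anc hacyc (Finset.mem_union_right _ hx)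
    exact ⟨z, hz, covers_ancOrEq hmono hc hzx⟩
  · have hy : y ∈ M.subSet V c := mem_subSet.mpr ⟨x, hx, he⟩
    obtain ⟨z, hz, hzy⟩ := exists_parentSet_anc hacyc (Finset.mem_union_left _ hy)
    exact ⟨z, hz, covers_ancOrEq hmono hc hzy⟩

theorem step_cover {V : Finset Q} {a : σ} {x : Q} {s : List σ} (hx : x ∈ M.parentSet V a)
    (hc : M.CoversState s x) : ∃ y ∈ V, M.CoversState (s ++ [a]) y := by
  rcases Finset.mem_union.mp (mem_parentSet.mp hx).1 with h | h
  · obtain ⟨y, hy, e⟩ := mem_subSet.mp h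
    obtain ⟨r, hr, hs⟩ := hc
    exact ⟨y, hy, r ++ [a], Machine.Reach.step hr e, hs.append (List.Sublist.refl [a])⟩
  · exact ⟨x, h, covers_mono_sub hc (List.sublist_append_left _ _)⟩

theorem co_isEdge {β γ : CoState Q} {a : σ} :
    (Machine.coMachine M).IsEdge β a γ ↔ M.CoEdge β a γ := by
  simp [Machine.IsEdge, Machine.coMachine, Finset.mem_filter]

theorem coReach_none {β : CoState Q} {t : List σ} (h : (Machine.coMachine M).Reach β t)
    (hβ : β = none) : t = [] := by
  induction h with
  | init => rfl
  | step hr he ih =>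
    subst hβ
    exact ((co_isEdge.mp he : False)).elim

theorem coReach_some_ne {β : CoState Q} {t : List σ} {x : (Finset Q × Finset Q) ⊕ Q}
    (h : (Machine.coMachine M).Reach β t) (hβ : β = some x) : t ≠ [] := by
  induction h with
  | init => exact absurd hβ (by simp [Machine.coMachine])
  | step hr he ih => simp

theorem coReach_inv {β : CoState Q} {t : List σ} {x : (Finset Q × Finset Q) ⊕ Q}
    (h : (Machine.coMachine M).Reach β t) (hβ : β = some x) :
    ∃ β' a t', t = t' ++ [a] ∧ (Machine.coMachine M).Reach β' t' ∧
      (Machine.coMachine M).IsEdge β' a (some x) := by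
  induction h with
  | init => exact absurd hβ (by simp [Machine.coMachine])
  | step hr he ih => exact ⟨_, _, _, rfl, hr, hβ ▸ he⟩

theorem sound_aux {β : CoState Q} {t : List σ} (h : (Machine.coMachine M).Reach β t) :
    ∀ V₁ V₂ : Finset Q, β = some (Sum.inl (V₁, V₂)) →
      (∃ x ∈ V₁, M.CoversState t x) ∧ (∃ x ∈ V₂, M.CoversState t.tail x) := by
  induction h with
  | init => intro V₁ V₂ h; exact absurd h (by simp [Machine.coMachine])
  | @step w γ a t' hr he ih =>
    intro V₁ V₂ hγ
    subst hγ
    have hce : (a ∈ M.inc V₁ ∪ M.inc V₂ ∧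
        ((M.parentSet V₁ a = {M.init} ∧ V₂ = ({M.init} : Finset Q) ∧ w = none) ∨
         (¬ (M.parentSet V₁ a = {M.init} ∧ V₂ = ({M.init} : Finset Q)) ∧
            w = some (Sum.inl (M.parentSet V₁ a, M.parentSet V₂ a))))) ∨
      (V₁ = ({M.init} : Finset Q) ∧ V₂ = ({M.init} : Finset Q) ∧ w = none) := co_isEdge.mp he
    rcases hce with ⟨hainc, hcase⟩ | ⟨hV₁, hV₂, hw⟩
    · rcases hcase with ⟨hpi, hV₂, hw⟩ | ⟨hnexc, hw⟩
      · have ht' : t' = [] := coReach_none hr hw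
        subst ht'
        constructor
        · have hi : M.init ∈ M.parentSet V₁ a := by rw [hpi]; exact Finset.mem_singleton_self _
          rcases Finset.mem_union.mp (mem_parentSet.mp hi).1 with h | h
          · obtain ⟨y, hy, e⟩ := mem_subSet.mp h
            exact ⟨y, hy, [] ++ [a], Machine.Reach.step Machine.Reach.init e,
              List.Sublist.refl _⟩
          · exact ⟨M.init, h, covers_init⟩
        · exact ⟨M.init, by rw [hV₂]; exact Finset.mem_singleton_self _, by simpa using covers_init⟩
      · obtain ⟨⟨x₁, hx₁, hc₁⟩, ⟨x₂, hx₂, hc₂⟩⟩ := ih _ _ hw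
        have htne : t' ≠ [] := coReach_some_ne hr hw
        refine ⟨step_cover hx₁ hc₁, ?_⟩
        rw [tail_append_of_ne_nil htne [a]]
        exact step_cover hx₂ hc₂
    · have ht' : t' = [] := coReach_none hr hw
      subst ht'
      constructor
      · exact ⟨M.init, by rw [hV₁]; exact Finset.mem_singleton_self _, covers_init⟩
      · exact ⟨M.init, by rw [hV₂]; exact Finset.mem_singleton_self _, by simpa using covers_init⟩

theorem complete_aux (hmono : M.Monotonic) (hacyc : M.Acyclic) (hsrc : M.InitSource) :
    ∀ u : List σ, ∀ V₁ V₂ : Finset Q, u ≠ [] →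
      Antich M V₁ → Antich M V₂ → CovAll M V₁ → CovAll M V₂ →
      (∃ x ∈ V₁, M.CoversState u x) → (∃ x ∈ V₂, M.CoversState u.tail x) →
      ∃ t, t ≠ [] ∧ t.Sublist u ∧
        (Machine.coMachine M).Reach (some (Sum.inl (V₁, V₂))) t := by
  intro u
  induction u using List.reverseRecOn with
  | nil => intro V₁ V₂ hne _ _ _ _ _ _; exact absurd rfl hne
  | append_singleton u' c ih =>
    intro V₁ V₂ _ hA₁ hA₂ hC₁ hC₂ hw₁ hw₂
    by_cases h12 : V₁ = ({M.init} : Finset Q) ∧ V₂ = ({M.init} : Finset Q)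
    · refine ⟨[c], by simp, List.sublist_append_right u' [c], ?_⟩
      exact Machine.Reach.step Machine.Reach.init
        (co_isEdge.mpr (Or.inr ⟨h12.1, h12.2, rfl⟩))
    by_cases hu' : u' = []
    · subst hu'
      obtain ⟨x₂, hx₂, hc₂⟩ := hw₂
      have hx₂i : x₂ = M.init := covers_nil_eq (by simpa using hc₂)
      have hV₂ : V₂ = {M.init} := eq_singleton_init hC₂ hA₂ (hx₂i ▸ hx₂)
      obtain ⟨x₁, hx₁, hc₁⟩ := hw₁
      rcases cover_concat_cases hc₁ with h | ⟨y, he, hcy⟩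
      · have hx₁i : x₁ = M.init := covers_nil_eq h
        exact absurd ⟨eq_singleton_init hC₁ hA₁ (hx₁i ▸ hx₁), hV₂⟩ h12
      · have hy : y = M.init := covers_nil_eq hcy
        subst hy
        have hsub : M.init ∈ M.subSet V₁ c := mem_subSet.mpr ⟨x₁, hx₁, he⟩
        have hpi : M.parentSet V₁ c = {M.init} :=
          parentSet_init hmono hsrc hC₁ (Finset.mem_union_left _ hsub)
        have hcinc : c ∈ M.inc V₁ ∪ M.inc V₂ :=
          Finset.mem_union_left _ (mem_inc.mpr ⟨M.init, x₁, hx₁, he⟩)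
        refine ⟨[c], by simp, List.Sublist.refl _, ?_⟩
        exact Machine.Reach.step Machine.Reach.init
          (co_isEdge.mpr (Or.inl ⟨hcinc, Or.inl ⟨hpi, hV₂, rfl⟩⟩))
    · have hut : (u' ++ [c]).tail = u'.tail ++ [c] := tail_append_of_ne_nil hu' [c]
      obtain ⟨x₁, hx₁, hc₁⟩ := hw₁
      obtain ⟨x₂, hx₂, hc₂⟩ := hw₂
      rw [hut] at hc₂
      have d₁ : (∃ x ∈ V₁, M.CoversState u' x) ∨
          (∃ x ∈ V₁, ∃ y, M.IsEdge y c x ∧ M.CoversState u' y) := by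
        rcases cover_concat_cases hc₁ with h | ⟨y, he, hcy⟩
        exacts [Or.inl ⟨x₁, hx₁, h⟩, Or.inr ⟨x₁, hx₁, y, he, hcy⟩]
      have d₂ : (∃ x ∈ V₂, M.CoversState u'.tail x) ∨
          (∃ x ∈ V₂, ∃ y, M.IsEdge y c x ∧ M.CoversState u'.tail y) := by
        rcases cover_concat_cases hc₂ with h | ⟨y, he, hcy⟩
        exacts [Or.inl ⟨x₂, hx₂, h⟩, Or.inr ⟨x₂, hx₂, y, he, hcy⟩]
      by_cases hskip : (∃ x ∈ V₁, M.CoversState u' x) ∧ (∃ x ∈ V₂, M.CoversState u'.tail x)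
      · obtain ⟨t, htne, hts, htr⟩ := ih V₁ V₂ hu' hA₁ hA₂ hC₁ hC₂ hskip.1 hskip.2
        exact ⟨t, htne, hts.trans (List.sublist_append_left u' [c]), htr⟩
      · have hcinc : c ∈ M.inc V₁ ∪ M.inc V₂ := by
          rcases not_and_or.mp hskip with h | h
          · rcases d₁ with h' | ⟨x, hx, y, he, _⟩
            · exact absurd h' h
            · exact Finset.mem_union_left _ (mem_inc.mpr ⟨y, x, hx, he⟩)
          · rcases d₂ with h' | ⟨x, hx, y, he, _⟩
            · exact absurd h' h
            · exact Finset.mem_union_right _ (mem_inc.mpr ⟨y, x, hx, he⟩)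
        have z₁ := witness_parentSet hmono hacyc d₁
        have z₂ := witness_parentSet hmono hacyc d₂
        by_cases hexc : M.parentSet V₁ c = ({M.init} : Finset Q) ∧ V₂ = ({M.init} : Finset Q)
        · refine ⟨[c], by simp, List.sublist_append_right u' [c], ?_⟩
          exact Machine.Reach.step Machine.Reach.init
            (co_isEdge.mpr (Or.inl ⟨hcinc, Or.inl ⟨hexc.1, hexc.2, rfl⟩⟩))
        · obtain ⟨t, htne, hts, htr⟩ := ih (M.parentSet V₁ c) (M.parentSet V₂ c) hu'
            antich_parentSet antich_parentSet (covAll_parentSet hmono hC₁)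
            (covAll_parentSet hmono hC₂) z₁ z₂
          refine ⟨t ++ [c], by simp, hts.append (List.Sublist.refl [c]), ?_⟩
          exact Machine.Reach.step htr
            (co_isEdge.mpr (Or.inl ⟨hcinc, Or.inr ⟨hexc, rfl⟩⟩))

end AuxProofs

/-- for a monotonic machine `M`, a non-initial state `v` of `M`, and a
sequence `s` of length `L ≥ 2`, `s` covers `α_v` in `co(M)` iff both the prefix
`s[1,L−1]` and the suffix `s[2,L]` cover `v` in `M`. -/
theorem coMachine_alpha_covers_iff {σ Q : Type} [Fintype σ] [Fintype Q] (M : Machine σ Q)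
    (hacyc : M.Acyclic) (hsrc : M.InitSource) (hmono : M.Monotonic)
    (v : Q) (hv : v ≠ M.init) (s : List σ) (hL : 2 ≤ s.length) :
    (Machine.coMachine M).CoversState s (some (Sum.inr v)) ↔
      (M.CoversState (window s 1 (s.length - 1)) v ∧
        M.CoversState (window s 2 s.length) v) := by
  have hw1 : window s 1 (s.length - 1) = s.dropLast := by
    simp [window, ← List.dropLast_eq_take]
  have hw2 : window s 2 s.length = s.tail := by
    simp [window, List.drop_one]
  rw [hw1, hw2]
  constructor
  · rintro ⟨t, hre, hts⟩
    obtain ⟨β', a, t'', rfl, hr', he⟩ := coReach_inv hre rfl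
    have hce : v ≠ M.init ∧
        ((a ∈ M.inc {v} ∧ β' = some (Sum.inl ({v}, M.parentSet {v} a))) ∨
         (a ∉ M.inc {v} ∧ β' = some (Sum.inl (({v} : Finset Q), ({v} : Finset Q))))) :=
      co_isEdge.mp he
    rcases hce.2 with ⟨hainc, hβ⟩ | ⟨hanin, hβ⟩
    · obtain ⟨⟨x₁, hx₁, hc₁⟩, ⟨x₂, hx₂, hc₂⟩⟩ := sound_aux hr' _ _ hβ
      constructor
      · exact covers_mono_sub ((Finset.mem_singleton.mp hx₁) ▸ hc₁)
          (concat_sublist_dropLast hts)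
      · have htne : t'' ≠ [] := coReach_some_ne hr' hβ
        obtain ⟨y, hy, hcy⟩ := step_cover hx₂ hc₂
        have hsub : (t''.tail ++ [a]).Sublist s.tail := by
          rw [← tail_append_of_ne_nil htne [a]]
          exact tail_sublist_tail hts
        exact covers_mono_sub ((Finset.mem_singleton.mp hy) ▸ hcy) hsub
    · obtain ⟨⟨x₁, hx₁, hc₁⟩, ⟨x₂, hx₂, hc₂⟩⟩ := sound_aux hr' _ _ hβ
      refine ⟨covers_mono_sub ((Finset.mem_singleton.mp hx₁) ▸ hc₁)
        (concat_sublist_dropLast hts), ?_⟩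
      have h2 : t''.tail.Sublist s.tail :=
        tail_sublist_tail ((List.sublist_append_left t'' [a]).trans hts)
      exact covers_mono_sub ((Finset.mem_singleton.mp hx₂) ▸ hc₂) h2
  · rintro ⟨hp, hq⟩
    rcases s.eq_nil_or_concat' with rfl | ⟨s', c, rfl⟩
    · simp at hL
    have hs' : s' ≠ [] := by rintro rfl; simp at hL
    rw [List.dropLast_concat] at hp
    rw [tail_append_of_ne_nil hs' [c]] at hq
    have hAv : Antich M ({v} : Finset Q) := by
      intro x hx y hy
      rw [Finset.mem_singleton] at hx hy
      subst hx; subst hy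
      exact hacyc _
    have hCv : CovAll M ({v} : Finset Q) := by
      intro x hx
      rw [Finset.mem_singleton] at hx
      subst hx
      exact ⟨s', hp⟩
    by_cases hcinc : c ∈ M.inc ({v} : Finset Q)
    · have hw₂ : ∃ x ∈ M.parentSet {v} c, M.CoversState s'.tail x := by
        apply witness_parentSet hmono hacyc
        rcases cover_concat_cases hq with h | ⟨y, he, hcy⟩
        · exact Or.inl ⟨v, Finset.mem_singleton_self v, h⟩
        · exact Or.inr ⟨v, Finset.mem_singleton_self v, y, he, hcy⟩
      obtain ⟨t, htne, hts, htr⟩ := complete_aux hmono hacyc hsrc s' {v} (M.parentSet {v} c)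
        hs' hAv antich_parentSet hCv (covAll_parentSet hmono hCv)
        ⟨v, Finset.mem_singleton_self v, hp⟩ hw₂
      exact ⟨t ++ [c], Machine.Reach.step htr (co_isEdge.mpr ⟨hv, Or.inl ⟨hcinc, rfl⟩⟩),
        hts.append (List.Sublist.refl [c])⟩
    · have hq' : M.CoversState s'.tail v := by
        rcases cover_concat_cases hq with h | ⟨y, he, _⟩
        · exact h
        · exact absurd (mem_inc.mpr ⟨y, v, Finset.mem_singleton_self v, he⟩) hcinc
      obtain ⟨t, htne, hts, htr⟩ := complete_aux hmono hacyc hsrc s' {v} {v} hs'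
        hAv hAv hCv hCv ⟨v, Finset.mem_singleton_self v, hp⟩
        ⟨v, Finset.mem_singleton_self v, hq'⟩
      exact ⟨t ++ [c], Machine.Reach.step htr (co_isEdge.mpr ⟨hv, Or.inr ⟨hcinc, rfl⟩⟩),
        hts.append (List.Sublist.refl [c])⟩
end
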